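/- With K(x,x') = k(x,x')·Id_Y for a bounded scalar kernel k and Y an infinite-dimensional separable Hilbert space, the self-adjoint operator ι∘ι^* : L²(X,P_X;Y) → L²(X,P_X;Y) is not compact, provided E_{X₁}[(E_{X₂}[k(X₁,X₂)])²] > 0. -/

import Mathlib

open MeasureTheory ContinuousLinearMap

/-!
Since `K = k • Id`, the kernel is symmetric (`k x x' ‖y‖² = ⟪ev x'^* y, ev x^* y⟫`) and
`ι ι^*` sends the constant function `y` to `x ↦ (∫ k x x' dμ(x')) • y`, whose `L²` norm
is `√I * ‖y‖` with `I = ∫ (∫ k x₁ x₂ dμ(x₂))² dμ(x₁) > 0`. So `ι ι^*` is bounded below on the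
constants. A compact operator that is bounded below on a Banach space maps its closed unit ball
homeomorphically into a compact set, so the ball is compact and, by Riesz's theorem, `Y` would be
finite-dimensional.
-/

theorem IsCompactOperator.finiteDimensional_of_antilipschitz {𝕜 E F : Type*}
    [NontriviallyNormedField 𝕜] [CompleteSpace 𝕜]
    [NormedAddCommGroup E] [NormedSpace 𝕜 E] [CompleteSpace E]
    [NormedAddCommGroup F] [NormedSpace 𝕜 F] {T : E →L[𝕜] F} (hT : IsCompactOperator T)
    {K : NNReal} (hK : AntilipschitzWith K T) : FiniteDimensional 𝕜 E := by
  have hball : IsCompact (T ⁻¹' closure (T '' Metric.closedBall 0 1)) :=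
    (hK.isClosedEmbedding T.uniformContinuous).isCompact_preimage
      (hT.isCompact_closure_image_closedBall (f := T.toLinearMap) 1)
  exact .of_isCompact_closedBall₀ 𝕜 one_pos <|
    hball.of_isClosed_subset Metric.isClosed_closedBall fun x hx => subset_closure ⟨x, hx, rfl⟩

theorem L2.norm_sq_of_ae_eq_smul_const {X Y : Type*} [MeasurableSpace X] {μ : Measure X}
    [NormedAddCommGroup Y] [InnerProductSpace ℝ Y] {g : X → ℝ} {y : Y} {F : Lp Y 2 μ}
    (hF : F =ᵐ[μ] fun x => g x • y) : ‖F‖ ^ 2 = (∫ x, g x ^ 2 ∂μ) * ‖y‖ ^ 2 := by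
  rw [← real_inner_self_eq_norm_sq, L2.inner_def, ← integral_mul_const]
  refine integral_congr_ae ?_
  filter_upwards [hF] with x hx
  rw [hx, real_inner_smul_left, real_inner_smul_right, real_inner_self_eq_norm_sq]
  ring

section ScalarKernel

variable {X H Y : Type*}
  [NormedAddCommGroup H] [InnerProductSpace ℝ H] [CompleteSpace H]
  [NormedAddCommGroup Y] [InnerProductSpace ℝ Y] [CompleteSpace Y]
  {ev : X → H →L[ℝ] Y} {k : X → X → ℝ}

theorem scalar_kernel_symm [Nontrivial Y]
    (hK : ∀ (x x' : X) (y : Y), ev x (adjoint (ev x') y) = k x x' • y) (x x' : X) :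
    k x x' = k x' x := by
  obtain ⟨y, hy⟩ := exists_ne (0 : Y)
  have hkernel :
      ∀ x x', k x x' * ‖y‖ ^ 2 = inner ℝ (adjoint (ev x') y) (adjoint (ev x) y) := by
    intro x x'
    rw [adjoint_inner_right, hK, real_inner_smul_left, real_inner_self_eq_norm_sq]
  have hy2 : ‖y‖ ^ 2 ≠ 0 := by positivity
  rw [← mul_left_inj' hy2, hkernel, hkernel, real_inner_comm]

variable [MeasurableSpace X] {μ : Measure X} [IsFiniteMeasure μ] [Nontrivial Y]
  {ι : H →L[ℝ] Lp Y 2 μ}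

theorem eval_adjoint_Lp_const
    (hK : ∀ (x x' : X) (y : Y), ev x (adjoint (ev x') y) = k x x' • y)
    (hι : ∀ f : H, (ι f : X → Y) =ᵐ[μ] fun x => ev x f) (y : Y) (x : X) :
    ev x (adjoint ι (Lp.const 2 μ y)) = (∫ x', k x x' ∂μ) • y := by
  refine ext_inner_right ℝ fun v => ?_
  rw [← adjoint_inner_right, adjoint_inner_left, L2.inner_def, real_inner_smul_left,
    ← integral_mul_const]
  refine integral_congr_ae ?_
  filter_upwards [Lp.coeFn_const 2 μ y, hι (adjoint (ev x) v)] with x' hconst hιx'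
  rw [hconst, hιx', hK, real_inner_smul_right, scalar_kernel_symm hK x' x, Function.const_apply]

theorem coeFn_apply_adjoint_Lp_const
    (hK : ∀ (x x' : X) (y : Y), ev x (adjoint (ev x') y) = k x x' • y)
    (hι : ∀ f : H, (ι f : X → Y) =ᵐ[μ] fun x => ev x f) (y : Y) :
    ι (adjoint ι (Lp.const 2 μ y)) =ᵐ[μ] fun x => (∫ x', k x x' ∂μ) • y := by
  filter_upwards [hι (adjoint ι (Lp.const 2 μ y))] with x hx
  rw [hx, eval_adjoint_Lp_const hK hι]

end ScalarKernel

theorem stmt6_general {X H Y : Type*}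
    [NormedAddCommGroup H] [InnerProductSpace ℝ H] [CompleteSpace H]
    [NormedAddCommGroup Y] [InnerProductSpace ℝ Y] [CompleteSpace Y]
    (hY : ¬ FiniteDimensional ℝ Y)
    [MeasurableSpace X] (μ : Measure X) [IsProbabilityMeasure μ]
    (ev : X → H →L[ℝ] Y)
    (k : X → X → ℝ)
    (hK : ∀ (x x' : X) (y : Y), ev x (ContinuousLinearMap.adjoint (ev x') y) = k x x' • y)
    (hpos : 0 < ∫ x₁, (∫ x₂, k x₁ x₂ ∂μ) ^ 2 ∂μ)
    (ι : H →L[ℝ] Lp Y 2 μ)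
    (hι : ∀ f : H, (ι f : X → Y) =ᵐ[μ] fun x => ev x f) :
    ¬ IsCompactOperator (fun g : Lp Y 2 μ => ι (ContinuousLinearMap.adjoint ι g)) := by
  intro hcompact
  have : Nontrivial Y := by
    by_contra htriv
    rw [not_nontrivial_iff_subsingleton] at htriv
    exact hY inferInstance
  set S : Y →L[ℝ] Lp Y 2 μ := (ι ∘L adjoint ι) ∘L Lp.constL 2 μ ℝ
  have hS : IsCompactOperator S := hcompact.comp_clm (Lp.constL 2 μ ℝ)
  set c := √(∫ x₁, (∫ x₂, k x₁ x₂ ∂μ) ^ 2 ∂μ)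
  have hc : 0 < c := Real.sqrt_pos.mpr hpos
  have hnorm : ∀ y, ‖S y‖ = c * ‖y‖ := fun y => by
    rw [← sq_eq_sq₀ (norm_nonneg _) (by positivity), mul_pow, Real.sq_sqrt hpos.le]
    exact L2.norm_sq_of_ae_eq_smul_const (coeFn_apply_adjoint_Lp_const hK hι y)
  have hanti : AntilipschitzWith c⁻¹.toNNReal S := S.antilipschitz_of_bound fun y => by
    rw [hnorm, Real.coe_toNNReal _ (inv_nonneg.2 hc.le), inv_mul_cancel_left₀ hc.ne']
  exact hY (hS.finiteDimensional_of_antilipschitz hanti)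

/-- With `K(x,x') = k(x,x')·Id_Y` for a bounded scalar kernel `k`
and `Y` an infinite-dimensional separable Hilbert space, the self-adjoint operator
`ι∘ι^* : L²(X,P_X;Y) → L²(X,P_X;Y)` is not compact, provided
`E_{X₁}[(E_{X₂}[k(X₁,X₂)])²] > 0`. -/
theorem stmt6 {X H Y : Type*}
    [NormedAddCommGroup H] [InnerProductSpace ℝ H] [CompleteSpace H]
    [NormedAddCommGroup Y] [InnerProductSpace ℝ Y] [CompleteSpace Y]
    [TopologicalSpace.SeparableSpace Y]
    (hY : ¬ FiniteDimensional ℝ Y)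
    [MeasurableSpace X] (μ : Measure X) [IsProbabilityMeasure μ]
    (ev : X → H →L[ℝ] Y)
    (k : X → X → ℝ) (Cb : ℝ) (hk : ∀ x x' : X, |k x x'| ≤ Cb)
    (hK : ∀ (x x' : X) (y : Y), ev x (ContinuousLinearMap.adjoint (ev x') y) = k x x' • y)
    (hpos : 0 < ∫ x₁, (∫ x₂, k x₁ x₂ ∂μ) ^ 2 ∂μ)
    (ι : H →L[ℝ] Lp Y 2 μ)
    (hι : ∀ f : H, (ι f : X → Y) =ᵐ[μ] fun x => ev x f) :
    ¬ IsCompactOperator (fun g : Lp Y 2 μ => ι (ContinuousLinearMap.adjoint ι g)) :=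
  stmt6_general hY μ ev k hK hpos ι hι
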